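/- For every integer n ≥ 2 and every pair of distinct elements i, j ∈ [[n]], the number of cross edges between the clusters BP_n^i and BP_n^j of the burnt pancake graph satisfies |E(BP_n^i, BP_n^j)| = (n−2)! · 2^{n−2} if i ≠ −j, and |E(BP_n^i, BP_n^j)| = 0 if i = −j. -/

import Mathlib

open SimpleGraph

/-- A signed permutation of `{1,…,n}`: a sequence of integers whose absolute
values form a permutation of `{1,…,n}`. -/
def SignedPerm (n : ℕ) : Type :=
  {x : Fin n → ℤ // (∀ i, 1 ≤ |x i| ∧ |x i| ≤ (n : ℤ)) ∧
    Function.Injective (fun i => |x i|)}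

/-- `prefixRevRel n i x y` means `y = x^i`, the `i`-th signed prefix reversal
of `x` (for `1 ≤ i ≤ n`). -/
def prefixRevRel (n i : ℕ) (x y : SignedPerm n) : Prop :=
  ∃ _h1 : 1 ≤ i, ∃ _h2 : i ≤ n, ∀ j : Fin n,
    (∀ _hj : (j : ℕ) < i, y.val j = - x.val ⟨i - 1 - (j : ℕ), by omega⟩) ∧
    ((i ≤ (j : ℕ)) → y.val j = x.val j)

/-- The burnt pancake graph `BP_n`. -/
def burntPancake (n : ℕ) : SimpleGraph (SignedPerm n) where
  Adj x y := x ≠ y ∧ ∃ i : ℕ, prefixRevRel n i x y ∨ prefixRevRel n i y x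
  symm := by
    refine ⟨?_⟩
    rintro x y ⟨hne, i, h⟩
    exact ⟨hne.symm, i, h.symm⟩
  loopless := by
    refine ⟨?_⟩
    rintro x ⟨hne, -⟩
    exact hne rfl

/-- The last entry of a signed permutation; the cluster `BP_n^j` consists of
the vertices with last entry `j`. -/
def lastEntry {n : ℕ} (hn : 0 < n) (x : SignedPerm n) : ℤ :=
  x.val ⟨n - 1, by omega⟩

/-- `y` is the out-neighbour of `x`, i.e. `y = x^n`. -/
def isOutNbr (n : ℕ) (x y : SignedPerm n) : Prop := prefixRevRel n n x y

/-- `T` is a family of `r` pairwise internally edge disjoint `S`-trees in `G`. -/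
def InternallyEdgeDisjointSTrees {V : Type*} (G : SimpleGraph V) (S : Set V)
    {r : ℕ} (T : Fin r → G.Subgraph) : Prop :=
  (∀ i, (T i).coe.IsTree ∧ S ⊆ (T i).verts) ∧
  ∀ i j, i ≠ j → (T i).verts ∩ (T j).verts = S ∧ (T i).edgeSet ∩ (T j).edgeSet = ∅

/-- `κ_G(S)`: the maximum number of pairwise internally edge disjoint `S`-trees. -/
noncomputable def treeConn {V : Type*} (G : SimpleGraph V) (S : Set V) : ℕ :=
  sSup {r : ℕ | ∃ T : Fin r → G.Subgraph, InternallyEdgeDisjointSTrees G S T}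

/-- The generalized `3`-connectivity `κ₃(G)`. -/
noncomputable def gconn3 {V : Type*} (G : SimpleGraph V) : ℕ :=
  sInf (treeConn G '' {S : Set V | S.ncard = 3})

/-- The connectivity `κ(G)`: the minimum cardinality of a set of vertices whose
deletion disconnects the graph or leaves fewer than two vertices. -/
noncomputable def vconn {V : Type*} (G : SimpleGraph V) : ℕ :=
  sInf {k : ℕ | ∃ U : Set V, U.Finite ∧ U.ncard = k ∧
    (¬ (G.induce Uᶜ).Connected ∨ Uᶜ.Subsingleton)}

/-! A prefix reversal `x^m` with `m < n` keeps the last entry, so the only cross edges are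
`x — x^n`, and the last entry of `x^n` is `-x₁`. Hence the cross edges from `BP_n^i` to `BP_n^j`
correspond to the signed permutations with first entry `-j` and last entry `i`. For `i = -j` there
are none; otherwise fixing these two entries leaves an arbitrary signed arrangement of the other
`n - 2` absolute values in the other `n - 2` positions, of which there are `(n-2)! · 2^(n-2)`. -/

open Finset

def signedInjections (ι : Type*) (A : Finset ℤ) : Set (ι → ℤ) :=
  {g | (∀ k, |g k| ∈ A) ∧ Function.Injective fun k => |g k|}

section SignedInjections

variable {ι : Type*} {A : Finset ℤ}

lemma abs_cond_of_nonneg {v : ℤ} (hv : 0 ≤ v) (b : Bool) : |cond b v (-v)| = v := by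
  cases b <;> simp [abs_of_nonneg hv]

lemma decide_nonneg_cond_of_pos {v : ℤ} (hv : 0 < v) (b : Bool) :
    decide (0 ≤ cond b v (-v)) = b := by
  cases b <;> simp <;> omega

lemma cond_decide_nonneg_abs (z : ℤ) : cond (decide (0 ≤ z)) |z| (-|z|) = z := by
  by_cases hz : 0 ≤ z <;> simp [hz, abs_of_nonneg, abs_of_neg, lt_of_not_ge]

def signedInjectionsEquiv (hA : ∀ v ∈ A, 0 < v) :
    signedInjections ι A ≃ (ι ↪ A) × (ι → Bool) where
  toFun g := (⟨fun k => ⟨|g.1 k|, g.2.1 k⟩, fun _ _ h => g.2.2 (congrArg Subtype.val h)⟩,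
    fun k => decide (0 ≤ g.1 k))
  invFun p := ⟨fun k => cond (p.2 k) (p.1 k : ℤ) (-p.1 k), by
    have habs k : |cond (p.2 k) (p.1 k : ℤ) (-p.1 k)| = p.1 k :=
      abs_cond_of_nonneg (hA _ (p.1 k).2).le _
    refine ⟨fun k => by simp only [habs, coe_mem], fun a b h => p.1.injective ?_⟩
    simpa only [habs, Subtype.ext_iff] using h⟩
  left_inv g := Subtype.ext (funext fun k => cond_decide_nonneg_abs (g.1 k))
  right_inv p := by
    refine Prod.ext (Function.Embedding.ext fun k => Subtype.ext ?_) (funext fun k => ?_)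
    · exact abs_cond_of_nonneg (hA _ (p.1 k).2).le _
    · exact decide_nonneg_cond_of_pos (hA _ (p.1 k).2) _

-- `Q` carries constraints on the remaining entries along, so that entries can be fixed one by one.
theorem ncard_signedInjections_apply_eq [DecidableEq ι] (p : ι) {a : ℤ} (ha : |a| ∈ A)
    (Q : ({k // k ≠ p} → ℤ) → Prop) :
    {g | g ∈ signedInjections ι A ∧ g p = a ∧ Q fun k => g k}.ncard =
      {h | h ∈ signedInjections {k // k ≠ p} (A.erase |a|) ∧ Q h}.ncard := by
  set restrict : (ι → ℤ) → {k // k ≠ p} → ℤ := fun g k => g k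
  set S := {g | g ∈ signedInjections ι A ∧ g p = a ∧ Q (restrict g)}
  have hinj : Set.InjOn restrict S := by
    rintro g ⟨-, hg, -⟩ g' ⟨-, hg', -⟩ h
    funext k
    by_cases hk : k = p
    · rw [hk, hg, hg']
    · exact congrFun h ⟨k, hk⟩
  suffices himg :
      restrict '' S = {h | h ∈ signedInjections {k // k ≠ p} (A.erase |a|) ∧ Q h} by
    rw [← himg, hinj.ncard_image]
  ext h
  constructor
  · rintro ⟨g, ⟨⟨hgA, hginj⟩, hgp, hQ⟩, rfl⟩
    have habs (k : {k // k ≠ p}) : |g k| ≠ |a| :=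
      fun he => k.2 (hginj (he.trans (congrArg _ hgp.symm)))
    exact ⟨⟨fun k => mem_erase.2 ⟨habs k, hgA k⟩, fun _ _ he => Subtype.ext (hginj he)⟩,
      hQ⟩
  · rintro ⟨⟨hA, hinj⟩, hQ⟩
    let g : ι → ℤ := fun k => if hk : k = p then a else h ⟨k, hk⟩
    have hrestrict : restrict g = h := funext fun k => dif_neg k.2
    refine ⟨g, ⟨⟨fun k => ?_, fun k l hkl => ?_⟩, dif_pos rfl, hrestrict ▸ hQ⟩,
      hrestrict⟩
    · by_cases hk : k = p
      · simpa [g, hk] using ha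
      · simpa [g, hk] using (mem_erase.1 (hA ⟨k, hk⟩)).2
    · by_cases hk : k = p <;> by_cases hl : l = p
      · rw [hk, hl]
      · simp only [g, hk, hl, dite_true, dite_false] at hkl
        exact absurd hkl.symm (mem_erase.1 (hA _)).1
      · simp only [g, hk, hl, dite_true, dite_false] at hkl
        exact absurd hkl (mem_erase.1 (hA _)).1
      · simp only [g, hk, hl, dite_false] at hkl
        exact congrArg Subtype.val (hinj hkl)

variable [Fintype ι]

theorem ncard_signedInjections (hA : ∀ v ∈ A, 0 < v) :
    (signedInjections ι A).ncard = (#A).descFactorial (Fintype.card ι) * 2 ^ Fintype.card ι := by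
  classical
  rw [← Nat.card_coe_set_eq, Nat.card_congr (signedInjectionsEquiv hA), Nat.card_eq_fintype_card,
    Fintype.card_prod, Fintype.card_embedding_eq, Fintype.card_coe, Fintype.card_fun,
    Fintype.card_bool]

end SignedInjections

lemma Fin.mk_sub_one_sub_eq_rev {n : ℕ} (k : Fin n) (h : n - 1 - k < n) :
    (⟨n - 1 - k, h⟩ : Fin n) = k.rev :=
  Fin.ext (by simp only [Fin.val_rev]; omega)

namespace SignedPerm

variable {n : ℕ}

def negRev (x : SignedPerm n) : SignedPerm n :=
  ⟨fun k => -x.val k.rev, fun k => by simpa using x.2.1 k.rev,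
    fun _ _ h => Fin.rev_injective (x.2.2 (by simpa using h))⟩

@[simp]
lemma negRev_val (x : SignedPerm n) (k : Fin n) : (negRev x).val k = -x.val k.rev := rfl

@[simp]
lemma negRev_negRev (x : SignedPerm n) : negRev (negRev x) = x :=
  Subtype.ext (funext fun k => by simp)

lemma prefixRevRel_negRev (hn : 0 < n) (x : SignedPerm n) : prefixRevRel n n x (negRev x) :=
  ⟨hn, le_rfl, fun k => ⟨fun _ => by rw [negRev_val, Fin.mk_sub_one_sub_eq_rev],
    fun hk => absurd k.2 (by omega)⟩⟩

lemma lastEntry_negRev (hn : 0 < n) (x : SignedPerm n) :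
    lastEntry hn (negRev x) = -x.val ⟨0, hn⟩ := by
  simp only [lastEntry, negRev_val]
  exact congrArg (fun l => -x.val l) (Fin.ext (by simp only [Fin.val_rev]; omega))

lemma lastEntry_eq_or_eq_negRev_of_prefixRevRel (hn : 0 < n) {m : ℕ} {x y : SignedPerm n}
    (h : prefixRevRel n m x y) : lastEntry hn y = lastEntry hn x ∨ y = negRev x := by
  obtain ⟨-, hmn, hxy⟩ := h
  rcases hmn.lt_or_eq with hlt | rfl
  · exact Or.inl ((hxy _).2 (Nat.le_sub_one_of_lt hlt))
  · refine Or.inr (Subtype.ext (funext fun k => ?_))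
    rw [(hxy k).1 k.2, negRev_val, Fin.mk_sub_one_sub_eq_rev]

lemma burntPancake_adj_iff_eq_negRev (hn : 0 < n) {x y : SignedPerm n}
    (hxy : lastEntry hn x ≠ lastEntry hn y) : (burntPancake n).Adj x y ↔ y = negRev x := by
  refine ⟨?_, ?_⟩
  · rintro ⟨-, m, h | h⟩
    · exact (lastEntry_eq_or_eq_negRev_of_prefixRevRel hn h).resolve_left hxy.symm
    · rcases lastEntry_eq_or_eq_negRev_of_prefixRevRel hn h with h | rfl
      · exact absurd h hxy
      · exact (negRev_negRev y).symm
  · rintro rfl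
    exact ⟨fun h => hxy (congrArg _ h), n, Or.inl (prefixRevRel_negRev hn x)⟩

lemma ncard_setOf_val (P : (Fin n → ℤ) → Prop) :
    {x : SignedPerm n | P x.val}.ncard =
      {g | g ∈ signedInjections (Fin n) (Icc 1 (n : ℤ)) ∧ P g}.ncard := by
  have hmem (g : Fin n → ℤ) :
      g ∈ signedInjections (Fin n) (Icc 1 (n : ℤ)) ↔
        (∀ k, 1 ≤ |g k| ∧ |g k| ≤ n) ∧ Function.Injective fun k => |g k| := by
    simp only [signedInjections, Set.mem_ofPred_eq, mem_Icc]
  refine Set.ncard_congr (fun x _ => x.val) (fun x hx => ⟨(hmem _).2 x.2, hx⟩)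
    (fun _ _ _ _ => Subtype.ext) ?_
  rintro g ⟨hg, hP⟩
  exact ⟨⟨g, (hmem g).1 hg⟩, hP, rfl⟩

theorem ncard_setOf_first_last (hn : 2 ≤ n) {a b : ℤ} (ha : 1 ≤ |a| ∧ |a| ≤ n)
    (hb : 1 ≤ |b| ∧ |b| ≤ n) (hab : |a| ≠ |b|) :
    {x : SignedPerm n | x.val ⟨0, zero_lt_two.trans_le hn⟩ = a ∧
        lastEntry (zero_lt_two.trans_le hn) x = b}.ncard =
      (n - 2).factorial * 2 ^ (n - 2) := by
  set first : Fin n := ⟨0, by omega⟩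
  set last : {k : Fin n // k ≠ first} :=
    ⟨⟨n - 1, by omega⟩, by simp only [ne_eq, Fin.ext_iff, first]; omega⟩
  have hpos : ∀ v ∈ ((Icc 1 (n : ℤ)).erase |a|).erase |b|, 0 < v := fun v hv => by
    simp only [mem_erase, mem_Icc] at hv
    omega
  have hcard : #(((Icc 1 (n : ℤ)).erase |a|).erase |b|) = n - 2 := by
    rw [card_erase_of_mem (by simp only [mem_erase, ne_eq, mem_Icc]; omega),
      card_erase_of_mem (by simp only [mem_Icc]; omega), Int.card_Icc]
    omega
  calc _ = {g | g ∈ signedInjections (Fin n) (Icc 1 (n : ℤ)) ∧ g first = a ∧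
          (fun k : {k // k ≠ first} => g k) last = b}.ncard := ncard_setOf_val _
    _ = {h | h ∈ signedInjections {k // k ≠ first} ((Icc 1 (n : ℤ)).erase |a|) ∧
          h last = b}.ncard :=
        ncard_signedInjections_apply_eq first (by simp only [mem_Icc]; omega) fun h => h last = b
    _ = (signedInjections {k' : {k // k ≠ first} // k' ≠ last}
          (((Icc 1 (n : ℤ)).erase |a|).erase |b|)).ncard := by
        simpa using ncard_signedInjections_apply_eq last
          (by simp only [mem_erase, ne_eq, mem_Icc]; omega) fun _ => True
    _ = (n - 2).factorial * 2 ^ (n - 2) := by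
        rw [ncard_signedInjections hpos, hcard]
        simp [Fintype.card_subtype_compl, Nat.sub_sub, Nat.descFactorial_self]

lemma val_zero_ne_lastEntry (hn : 2 ≤ n) (x : SignedPerm n) :
    x.val ⟨0, zero_lt_two.trans_le hn⟩ ≠ lastEntry (zero_lt_two.trans_le hn) x := fun h => by
  have : 0 = n - 1 := congrArg Fin.val (x.2.2 (congrArg abs h))
  omega

end SignedPerm

open SignedPerm in
theorem ncard_burntPancake_crossEdges {n : ℕ} (hn : 0 < n) {i j : ℤ} (hij : i ≠ j) :
    {p : SignedPerm n × SignedPerm n |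
        lastEntry hn p.1 = i ∧ lastEntry hn p.2 = j ∧ (burntPancake n).Adj p.1 p.2}.ncard =
      {x : SignedPerm n | x.val ⟨0, hn⟩ = -j ∧ lastEntry hn x = i}.ncard := by
  rw [← Set.ncard_image_of_injective _ (fun _ _ h => congrArg Prod.fst h :
    Function.Injective fun x : SignedPerm n => (x, negRev x))]
  congr 1
  ext ⟨x, y⟩
  simp only [Set.mem_ofPred_eq, Set.mem_image, Prod.mk.injEq]
  constructor
  · rintro ⟨rfl, rfl, hadj⟩
    have hy := (burntPancake_adj_iff_eq_negRev hn hij).1 hadj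
    exact ⟨x, ⟨by rw [hy, lastEntry_negRev, neg_neg], rfl⟩, rfl, hy.symm⟩
  · rintro ⟨x, ⟨hx0, rfl⟩, rfl, rfl⟩
    have hy : lastEntry hn (negRev x) = j := by rw [lastEntry_negRev, hx0, neg_neg]
    exact ⟨rfl, hy, (burntPancake_adj_iff_eq_negRev hn (hy ▸ hij)).2 rfl⟩

/-- For `n ≥ 2` and distinct `i, j ∈ [[n]]`, the number of cross edges
between the clusters `BP_n^i` and `BP_n^j` is `(n-2)! · 2^{n-2}` if
`i ≠ -j`, and `0` if `i = -j`. -/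
theorem bp_cross_edges_count (n : ℕ) (hn : 2 ≤ n) (i j : ℤ)
    (hi : 1 ≤ |i| ∧ |i| ≤ (n : ℤ)) (hj : 1 ≤ |j| ∧ |j| ≤ (n : ℤ))
    (hij : i ≠ j) :
    (i ≠ -j →
      {p : SignedPerm n × SignedPerm n |
          lastEntry (by omega) p.1 = i ∧ lastEntry (by omega) p.2 = j ∧
          (burntPancake n).Adj p.1 p.2}.ncard
        = (n - 2).factorial * 2 ^ (n - 2)) ∧
    (i = -j →
      {p : SignedPerm n × SignedPerm n |
          lastEntry (by omega) p.1 = i ∧ lastEntry (by omega) p.2 = j ∧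
          (burntPancake n).Adj p.1 p.2}.ncard = 0) := by
  rw [ncard_burntPancake_crossEdges (by omega) hij]
  refine ⟨fun hij' => ?_, fun hij' => ?_⟩
  · have habs : |-j| ≠ |i| := by
      rw [abs_neg]
      exact fun h => (abs_eq_abs.1 h).elim (fun h => hij h.symm) fun h => hij' (by omega)
    exact SignedPerm.ncard_setOf_first_last hn (by rwa [abs_neg]) hi habs
  · have hempty :
        {x : SignedPerm n | x.val ⟨0, by omega⟩ = -j ∧ lastEntry (by omega) x = i} = ∅ :=
      Set.eq_empty_of_forall_notMem fun x hx =>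
        SignedPerm.val_zero_ne_lastEntry hn x (hx.1.trans (hx.2.trans hij').symm)
    rw [hempty, Set.ncard_empty]
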